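/- Every fully supported Borel probability measure on a compact connected metric space X is a W_∞-limit of finitely supported probability measures; more precisely, for every faithful μ ∈ M(X) and ε > 0 there exist n ∈ ℕ and points x_1, …, x_n ∈ X with W_∞(μ, (1/n)∑ δ_{x_i}) < ε. -/

import Mathlib

open MeasureTheory
open scoped ENNReal

/-- The `∞`-Wasserstein (optimal matching) distance:
`inf {r > 0 : μ(U) ≤ ν(U_r)` for all Borel `U}`. -/
noncomputable def Winf {E : Type*} [MeasurableSpace E] [PseudoMetricSpace E]
    (μ ν : Measure E) : ℝ :=
  sInf {r : ℝ | 0 < r ∧ ∀ U : Set E, MeasurableSet U → μ U ≤ ν (Metric.thickening r U)}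

lemma exists_fiber_fun (m n : ℕ) (w : Fin m → ℕ) (h : ∑ i, w i = n) :
    ∃ f : Fin n → Fin m, ∀ i, (Finset.univ.filter fun j => f j = i).card = w i := by
  have hcard : Fintype.card (Σ i : Fin m, Fin (w i)) = n := by
    simp [Fintype.card_sigma, h]
  obtain ⟨e⟩ : Nonempty ((Σ i : Fin m, Fin (w i)) ≃ Fin n) :=
    ⟨Fintype.equivFinOfCardEq hcard⟩
  refine ⟨fun j => (e.symm j).1, fun i => ?_⟩
  have h1 : (Finset.univ.filter fun j : Fin n => (e.symm j).1 = i).card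
      = (Finset.univ.filter fun p : Σ i : Fin m, Fin (w i) => p.1 = i).card := by
    apply Finset.card_bij (fun j _ => e.symm j)
    · intro j hj; simp_all
    · intro a ha b hb hab; exact e.symm.injective hab
    · intro p hp; exact ⟨e p, by simp_all⟩
  have h2 : (Finset.univ.filter fun p : Σ i : Fin m, Fin (w i) => p.1 = i)
      = ({i} : Finset (Fin m)).sigma (fun i => Finset.univ) := by
    ext ⟨a, b⟩; simp [eq_comm]
  rw [h1, h2, Finset.card_sigma]; simp

lemma closure_inter_nonempty {X : Type*} [TopologicalSpace X] [ConnectedSpace X]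
    {V W : Set X} (hVne : V.Nonempty) (hWne : W.Nonempty)
    (hW : IsOpen W) (hdense : Dense (V ∪ W)) : (closure V ∩ closure W).Nonempty := by
  by_contra h
  rw [Set.not_nonempty_iff_eq_empty] at h
  have hsub : (closure W)ᶜ ⊆ closure V := by
    intro x hx
    rw [mem_closure_iff]
    intro O hO hxO
    have hO' : IsOpen (O \ closure W) := hO.sdiff isClosed_closure
    obtain ⟨z, hz1, hz2⟩ := hdense.inter_open_nonempty _ hO' ⟨x, hxO, hx⟩
    rcases hz2 with hz2 | hz2
    · exact ⟨z, hz1.1, hz2⟩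
    · exact absurd (subset_closure hz2) hz1.2
  have hsub2 : closure V ⊆ (closure W)ᶜ := by
    intro x hx hx2
    exact Set.eq_empty_iff_forall_notMem.mp h x ⟨hx, hx2⟩
  have heq : closure V = (closure W)ᶜ := le_antisymm hsub2 hsub
  have hclopen : IsClopen (closure V) := ⟨isClosed_closure, heq ▸ isClosed_closure.isOpen_compl⟩
  rcases isClopen_iff.mp hclopen with h1 | h1
  · exact hVne.ne_empty (Set.subset_eq_empty subset_closure h1)
  · obtain ⟨w, hw⟩ := hWne
    have : w ∈ closure V := h1 ▸ Set.mem_univ w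
    rw [heq] at this
    exact this (subset_closure hw)

theorem faithful_measure_winf_approx_by_finitely_supported {X : Type*} [MetricSpace X]
    [CompactSpace X] [ConnectedSpace X] [MeasurableSpace X] [BorelSpace X]
    (μ : Measure X) [IsProbabilityMeasure μ]
    (hμ : ∀ U : Set X, IsOpen U → U.Nonempty → 0 < μ U)
    (ε : ℝ) (hε : 0 < ε) :
    ∃ (n : ℕ) (_ : 0 < n) (x : Fin n → X),
      Winf μ ((n : ℝ≥0∞)⁻¹ • ∑ i : Fin n, Measure.dirac (x i)) < ε := by
  classical
  set δ : ℝ := ε/4 with hδdef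
  have hδ : 0 < δ := by positivity
  set r : ℝ := 7*ε/8 with hrdef
  have hrpos : 0 < r := by positivity
  have hrε : r < ε := by rw [hrdef]; linarith
  have hδr : δ < r := by rw [hδdef, hrdef]; linarith
  -- finite cover by δ-balls
  obtain ⟨t, ht⟩ := isCompact_univ.elim_finite_subcover (fun x : X => Metric.ball x δ)
    (fun x => Metric.isOpen_ball)
    (fun x _ => Set.mem_iUnion.mpr ⟨x, Metric.mem_ball_self hδ⟩)
  set m : ℕ := t.card with hmdef
  set y : Fin m → X := fun i => ((t.equivFin.symm i : t) : X) with hydef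
  have hcovy : ∀ x : X, ∃ i : Fin m, x ∈ Metric.ball (y i) δ := by
    intro x
    have := ht (Set.mem_univ x)
    simp only [Set.mem_iUnion] at this
    obtain ⟨p, hp, hxp⟩ := this
    refine ⟨t.equivFin ⟨p, hp⟩, ?_⟩
    simp [hydef, hxp]
  -- disjointified pieces
  set A : Fin m → Set X := fun i =>
    Metric.ball (y i) δ \ ⋃ (i' : Fin m) (_ : i' < i), Metric.ball (y i') δ with hAdef
  have hAsub : ∀ i, A i ⊆ Metric.ball (y i) δ := fun i => Set.diff_subset
  have hAmeas : ∀ i, MeasurableSet (A i) := by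
    intro i
    exact Metric.isOpen_ball.measurableSet.diff
      (MeasurableSet.iUnion fun i' => MeasurableSet.iUnion fun _ =>
        Metric.isOpen_ball.measurableSet)
  have hAdisj : Pairwise (Function.onFun Disjoint A) := by
    intro i j hij
    rcases lt_or_gt_of_ne hij with h | h
    · refine Set.disjoint_left.mpr fun x hxi hxj => ?_
      exact hxj.2 (Set.mem_iUnion.mpr ⟨i, Set.mem_iUnion.mpr ⟨h, hAsub i hxi⟩⟩)
    · refine Set.disjoint_left.mpr fun x hxi hxj => ?_
      exact hxi.2 (Set.mem_iUnion.mpr ⟨j, Set.mem_iUnion.mpr ⟨h, hAsub j hxj⟩⟩)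
  have hAcov : (⋃ i, A i) = Set.univ := by
    refine Set.eq_univ_of_forall fun x => ?_
    have hne : (Finset.univ.filter fun i : Fin m => x ∈ Metric.ball (y i) δ).Nonempty := by
      obtain ⟨i, hi⟩ := hcovy x
      exact ⟨i, Finset.mem_filter.mpr ⟨Finset.mem_univ i, hi⟩⟩
    set i := (Finset.univ.filter fun i : Fin m => x ∈ Metric.ball (y i) δ).min' hne with hidef
    have hiball : x ∈ Metric.ball (y i) δ := by
      have := (Finset.univ.filter fun i : Fin m => x ∈ Metric.ball (y i) δ).min'_mem hne
      exact (Finset.mem_filter.mp this).2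
    refine Set.mem_iUnion.mpr ⟨i, hiball, fun hx => ?_⟩
    simp only [Set.mem_iUnion] at hx
    obtain ⟨i', hi'lt, hi'ball⟩ := hx
    have : i ≤ i' := Finset.min'_le _ _ (Finset.mem_filter.mpr ⟨Finset.mem_univ i', hi'ball⟩)
    exact absurd hi'lt (not_lt.mpr this)
  -- real masses
  set a : Fin m → ℝ := fun i => (μ (A i)).toReal with hadef
  have ha0 : ∀ i, 0 ≤ a i := fun i => ENNReal.toReal_nonneg
  have haofReal : ∀ i, μ (A i) = ENNReal.ofReal (a i) := fun i =>
    (ENNReal.ofReal_toReal (measure_ne_top μ _)).symm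
  have hsumA : ∑ i, μ (A i) = 1 := by
    rw [← tsum_fintype (L := SummationFilter.unconditional _), ← measure_iUnion hAdisj hAmeas, hAcov, measure_univ]
  have hsum1 : ∑ i, a i = 1 := by
    have := congrArg ENNReal.toReal hsumA
    rwa [ENNReal.toReal_sum (fun i _ => measure_ne_top μ _), ENNReal.toReal_one] at this
  set K : Finset (Fin m) := Finset.univ.filter fun i => μ (A i) ≠ 0 with hKdef
  have hKne : K.Nonempty := by
    by_contra h
    rw [Finset.not_nonempty_iff_eq_empty] at h
    have : ∀ i : Fin m, μ (A i) = 0 := by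
      intro i
      by_contra h2
      exact absurd (hKdef ▸ Finset.mem_filter.mpr ⟨Finset.mem_univ i, h2⟩) (h ▸ Finset.notMem_empty i)
    have : ∑ i, a i = 0 := Finset.sum_eq_zero fun i _ => by simp [hadef, this i]
    rw [hsum1] at this; norm_num at this
  obtain ⟨i₁, hi₁K, hamin⟩ := K.exists_min_image a hKne
  have hμAi₁ : μ (A i₁) ≠ 0 := (Finset.mem_filter.mp hi₁K).2
  have haminpos : 0 < a i₁ := ENNReal.toReal_pos hμAi₁ (measure_ne_top μ _)
  -- choose n
  obtain ⟨n, hn⟩ := exists_nat_ge ((m + 1) / a i₁)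
  have hnpos : 0 < n := by
    by_contra h
    push_neg at h
    interval_cases n
    have : (0:ℝ) < (m + 1) / a i₁ := div_pos (by have : (0:ℝ) ≤ m := Nat.cast_nonneg _; linarith) haminpos
    simp at hn; linarith
  have hnR : (0:ℝ) < n := by exact_mod_cast hnpos
  have hnK : ∀ i ∈ K, (m + 1 : ℝ) ≤ n * a i := by
    intro i hi
    have h1 : (m + 1 : ℝ) = ((m + 1) / a i₁) * a i₁ := by field_simp
    calc (m + 1 : ℝ) = ((m + 1) / a i₁) * a i₁ := h1
      _ ≤ n * a i₁ := by apply mul_le_mul_of_nonneg_right hn haminpos.le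
      _ ≤ n * a i := by apply mul_le_mul_of_nonneg_left (hamin i hi) hnR.le
  have hfloorK : ∀ i ∈ K, m + 1 ≤ ⌊(n : ℝ) * a i⌋₊ := by
    intro i hi
    apply Nat.le_floor
    push_cast
    exact hnK i hi
  -- weights
  set B : ℕ := ∑ i ∈ K.erase i₁, ⌊(n : ℝ) * a i⌋₊ with hBdef
  set w : Fin m → ℕ := fun i =>
    if i = i₁ then n - B else if i ∈ K then ⌊(n : ℝ) * a i⌋₊ else 0 with hwdef
  have hwK0 : ∀ i, i ∉ K → w i = 0 := by
    intro i hi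
    have : i ≠ i₁ := fun h => hi (h ▸ hi₁K)
    simp [hwdef, this, hi]
  have hBreal : (B : ℝ) + ⌊(n : ℝ) * a i₁⌋₊ ≤ n := by
    have h1 : (B : ℝ) + ⌊(n : ℝ) * a i₁⌋₊ ≤ ∑ i ∈ K, (n : ℝ) * a i := by
      rw [hBdef]
      push_cast
      rw [← Finset.sum_erase_add K _ hi₁K]
      apply add_le_add
      · exact Finset.sum_le_sum fun i _ => Nat.floor_le (by positivity)
      · exact Nat.floor_le (by positivity)
    have h2 : ∑ i ∈ K, (n : ℝ) * a i ≤ ∑ i : Fin m, (n : ℝ) * a i := by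
      apply Finset.sum_le_sum_of_subset_of_nonneg (Finset.subset_univ K)
      intro i _ _; positivity
    have h3 : ∑ i : Fin m, (n : ℝ) * a i = n := by
      rw [← Finset.mul_sum, hsum1, mul_one]
    linarith
  have hBn : B ≤ n := by
    have : (B : ℝ) ≤ n := le_trans (le_add_of_nonneg_right (by positivity)) hBreal
    exact_mod_cast this
  have hwfloor : ∀ i ∈ K, ⌊(n : ℝ) * a i⌋₊ ≤ w i := by
    intro i hi
    by_cases h : i = i₁
    · subst h
      simp only [hwdef, if_pos rfl]
      rw [Nat.le_sub_iff_add_le hBn]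
      have : (⌊(n : ℝ) * a i⌋₊ + B : ℝ) ≤ n := by linarith [hBreal]
      exact_mod_cast this
    · simp [hwdef, h, hi]
  have hwm : ∀ i ∈ K, m + 1 ≤ w i := fun i hi => le_trans (hfloorK i hi) (hwfloor i hi)
  have hsumw : ∑ i, w i = n := by
    rw [← Finset.add_sum_erase Finset.univ w (Finset.mem_univ i₁)]
    have he : ∑ i ∈ Finset.univ.erase i₁, w i = ∑ i ∈ K.erase i₁, w i := by
      apply (Finset.sum_subset (Finset.erase_subset_erase _ (Finset.subset_univ K)) _).symm
      intro i hin hiK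
      by_cases h : i ∈ K
      · exact absurd (Finset.mem_erase.mpr ⟨(Finset.mem_erase.mp hin).1, h⟩) hiK
      · exact hwK0 i h
    have hB : ∑ i ∈ K.erase i₁, w i = B := by
      rw [hBdef]
      apply Finset.sum_congr rfl
      intro i hi
      have h1 : i ≠ i₁ := (Finset.mem_erase.mp hi).1
      have h2 : i ∈ K := (Finset.mem_erase.mp hi).2
      simp [hwdef, h1, h2]
    rw [he, hB]
    simp only [hwdef, if_pos rfl]
    exact Nat.sub_add_cancel hBn
  have hwup : ∀ i, μ (A i) ≤ ENNReal.ofReal ((w i + 1) / n) := by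
    intro i
    by_cases hi : i ∈ K
    · rw [haofReal i]
      apply ENNReal.ofReal_le_ofReal
      rw [le_div_iff₀ hnR]
      have h1 : (n : ℝ) * a i < ⌊(n : ℝ) * a i⌋₊ + 1 := Nat.lt_floor_add_one _
      have h2 : (⌊(n : ℝ) * a i⌋₊ : ℝ) ≤ w i := by exact_mod_cast hwfloor i hi
      rw [mul_comm]
      linarith
    · have : μ (A i) = 0 := by
        by_contra h
        exact hi (Finset.mem_filter.mpr ⟨Finset.mem_univ i, h⟩)
      simp [this]
  -- build the point family
  obtain ⟨f, hf⟩ := exists_fiber_fun m n w hsumw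
  refine ⟨n, hnpos, y ∘ f, ?_⟩
  set ν : Measure X := (n : ℝ≥0∞)⁻¹ • ∑ j : Fin n, Measure.dirac ((y ∘ f) j) with hνdef
  have hn0' : (n : ℝ≥0∞) ≠ 0 := by exact_mod_cast hnpos.ne'
  have hntop : (n : ℝ≥0∞) ≠ ⊤ := ENNReal.natCast_ne_top n
  -- lower bound for ν on sets containing chosen points
  have hν : ∀ (T : Set X), MeasurableSet T → ∀ S'' : Finset (Fin m),
      (∀ i ∈ S'', y i ∈ T) → ((∑ i ∈ S'', w i : ℕ) : ℝ≥0∞) / n ≤ ν T := by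
    intro T hT S'' hmem
    have happ : ν T = (n : ℝ≥0∞)⁻¹ * ∑ j : Fin n, Measure.dirac ((y ∘ f) j) T := by
      rw [hνdef, Measure.smul_apply, smul_eq_mul, Measure.coe_finset_sum, Finset.sum_apply]
    have hcardsum : ∑ i ∈ S'', w i = (Finset.univ.filter fun j : Fin n => f j ∈ S'').card := by
      have : (Finset.univ.filter fun j : Fin n => f j ∈ S'')
          = S''.biUnion fun i => Finset.univ.filter fun j : Fin n => f j = i := by
        ext j; simp
      rw [this, Finset.card_biUnion]
      · exact Finset.sum_congr rfl fun i _ => (hf i).symm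
      · intro i _ i' _ hii'
        simp only [Finset.disjoint_left, Finset.mem_filter]
        rintro j ⟨-, h1⟩ ⟨-, h2⟩
        exact hii' (h1.symm.trans h2)
    have hsumge : ((Finset.univ.filter fun j : Fin n => f j ∈ S'').card : ℝ≥0∞)
        ≤ ∑ j : Fin n, Measure.dirac ((y ∘ f) j) T := by
      calc ((Finset.univ.filter fun j : Fin n => f j ∈ S'').card : ℝ≥0∞)
          = ∑ j ∈ Finset.univ.filter fun j : Fin n => f j ∈ S'', 1 := by
            simp
        _ = ∑ j ∈ Finset.univ.filter fun j : Fin n => f j ∈ S'',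
              Measure.dirac ((y ∘ f) j) T := by
            apply Finset.sum_congr rfl
            intro j hj
            rw [Measure.dirac_apply' _ hT]
            have : (y ∘ f) j ∈ T := hmem _ (Finset.mem_filter.mp hj).2
            rw [Set.indicator_of_mem this]; rfl
        _ ≤ ∑ j : Fin n, Measure.dirac ((y ∘ f) j) T :=
            Finset.sum_le_sum_of_subset (Finset.filter_subset _ _)
    rw [happ, ENNReal.div_eq_inv_mul]
    apply mul_le_mul_right
    rw [hcardsum]
    exact hsumge
  have hrmem : r ∈ {r : ℝ | 0 < r ∧ ∀ U : Set X, MeasurableSet U →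
      μ U ≤ ν (Metric.thickening r U)} := by
    refine ⟨hrpos, fun U hU => ?_⟩
    set T := Metric.thickening r U with hTdef
    have hTmeas : MeasurableSet T := Metric.isOpen_thickening.measurableSet
    set S : Finset (Fin m) := Finset.univ.filter fun i => μ (U ∩ A i) ≠ 0 with hSdef
    have hSK : S ⊆ K := by
      intro i hi
      have h1 : μ (U ∩ A i) ≠ 0 := (Finset.mem_filter.mp hi).2
      refine Finset.mem_filter.mpr ⟨Finset.mem_univ i, fun h => h1 ?_⟩
      exact le_antisymm (h ▸ measure_mono Set.inter_subset_right) zero_le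
    have hUpt : ∀ i ∈ S, ∃ u ∈ U, dist (y i) u < δ := by
      intro i hi
      obtain ⟨u, hu⟩ := nonempty_of_measure_ne_zero (Finset.mem_filter.mp hi).2
      refine ⟨u, hu.1, ?_⟩
      have := hAsub i hu.2
      rw [Metric.mem_ball] at this
      rw [dist_comm]; exact this
    have hyS : ∀ i ∈ S, y i ∈ T := by
      intro i hi
      obtain ⟨u, huU, hud⟩ := hUpt i hi
      exact Metric.mem_thickening_iff.mpr ⟨u, huU, lt_trans hud hδr⟩
    have hμU : μ U ≤ ∑ i ∈ S, μ (A i) := by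
      have h1 : U = ⋃ i, U ∩ A i := by rw [← Set.inter_iUnion, hAcov, Set.inter_univ]
      calc μ U = μ (⋃ i, U ∩ A i) := by rw [← h1]
        _ ≤ ∑' i, μ (U ∩ A i) := measure_iUnion_le _
        _ = ∑ i, μ (U ∩ A i) := tsum_fintype _
        _ = ∑ i ∈ S, μ (U ∩ A i) := by
            symm
            apply Finset.sum_subset (Finset.subset_univ S)
            intro i _ hiS
            by_contra h
            exact hiS (Finset.mem_filter.mpr ⟨Finset.mem_univ i, h⟩)
        _ ≤ ∑ i ∈ S, μ (A i) :=
            Finset.sum_le_sum fun i _ => measure_mono Set.inter_subset_right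
    by_cases hSe : S = ∅
    · rw [hSe] at hμU
      simpa using le_trans hμU zero_le
    by_cases hKS : K ⊆ S
    · have hSK' : S = K := Finset.Subset.antisymm hSK hKS
      have hle : ((∑ i ∈ K, w i : ℕ) : ℝ≥0∞) / n ≤ ν T :=
        hν T hTmeas K (fun i hi => hyS i (hSK' ▸ hi))
      have hKsum : ∑ i ∈ K, w i = n := by
        rw [← hsumw]
        apply Finset.sum_subset (Finset.subset_univ K)
        intro i _ h; exact hwK0 i h
      rw [hKsum, ENNReal.div_self hn0' hntop] at hle
      exact le_trans prob_le_one hle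
    obtain ⟨k₂, hk₂K, hk₂S⟩ := Finset.not_subset.mp hKS
    obtain ⟨j₀, hj₀⟩ := Finset.nonempty_iff_ne_empty.mpr hSe
    set V : Set X := ⋃ i ∈ S, Metric.ball (y i) δ with hVdef
    set W : Set X := ⋃ i ∈ K \ S, Metric.ball (y i) δ with hWdef
    have hVmem : ∀ x, x ∈ V → ∃ j ∈ S, dist x (y j) < δ := by
      intro x hx
      simp only [hVdef, Set.mem_iUnion, Metric.mem_ball] at hx
      obtain ⟨j, hj1, hj2⟩ := hx
      exact ⟨j, hj1, hj2⟩
    have hWmem : ∀ x, x ∈ W → ∃ k, (k ∈ K ∧ k ∉ S) ∧ dist x (y k) < δ := by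
      intro x hx
      simp only [hWdef, Set.mem_iUnion, Metric.mem_ball, Finset.mem_sdiff] at hx
      obtain ⟨k, hk1, hk2⟩ := hx
      exact ⟨k, hk1, hk2⟩
    have hclaim : ∃ k₀, (k₀ ∈ K ∧ k₀ ∉ S) ∧ y k₀ ∈ T := by
      by_cases hmeet : (V ∩ W).Nonempty
      · obtain ⟨p, hpV, hpW⟩ := hmeet
        obtain ⟨j, hjS, hjd⟩ := hVmem p hpV
        obtain ⟨k, hkKS, hkd⟩ := hWmem p hpW
        obtain ⟨u, huU, hud⟩ := hUpt j hjS
        refine ⟨k, hkKS, Metric.mem_thickening_iff.mpr ⟨u, huU, ?_⟩⟩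
        calc dist (y k) u ≤ dist (y k) p + dist p (y j) + dist (y j) u := dist_triangle4 _ _ _ _
          _ < δ + δ + δ := by
              apply add_lt_add (add_lt_add _ hjd) hud
              rw [dist_comm]; exact hkd
          _ < r := by rw [hδdef, hrdef]; linarith
      · have hdisj : V ∩ W = ∅ := Set.not_nonempty_iff_eq_empty.mp hmeet
        have hdense : Dense (V ∪ W) := by
          rw [dense_iff_inter_open]
          intro O hO hOne
          by_contra hno
          rw [Set.not_nonempty_iff_eq_empty] at hno
          have hOsub : O ⊆ ⋃ i ∈ (Finset.univ \ K : Finset (Fin m)), A i := by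
            intro x hx
            have hx2 : x ∉ V ∪ W := fun h =>
              Set.eq_empty_iff_forall_notMem.mp hno x ⟨hx, h⟩
            have : x ∈ ⋃ i, A i := hAcov ▸ Set.mem_univ x
            obtain ⟨i, hi⟩ := Set.mem_iUnion.mp this
            have hiK : i ∉ K := by
              intro hiK
              by_cases hiS : i ∈ S
              · exact hx2 (Or.inl (Set.mem_biUnion hiS (hAsub i hi)))
              · exact hx2 (Or.inr (Set.mem_biUnion (Finset.mem_sdiff.mpr ⟨hiK, hiS⟩)
                  (hAsub i hi)))
            exact Set.mem_biUnion (Finset.mem_sdiff.mpr ⟨Finset.mem_univ i, hiK⟩) hi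
          have hμO : μ O = 0 := by
            refine le_antisymm ?_ zero_le
            calc μ O ≤ μ (⋃ i ∈ (Finset.univ \ K : Finset (Fin m)), A i) :=
                  measure_mono hOsub
              _ ≤ ∑ i ∈ (Finset.univ \ K : Finset (Fin m)), μ (A i) :=
                  measure_biUnion_finset_le _ _
              _ = 0 := by
                  apply Finset.sum_eq_zero
                  intro i hi
                  have hiK : i ∉ K := (Finset.mem_sdiff.mp hi).2
                  by_contra h
                  exact hiK (Finset.mem_filter.mpr ⟨Finset.mem_univ i, h⟩)
          exact absurd (hμ O hO hOne) (by rw [hμO]; exact lt_irrefl 0)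
        have hVne : V.Nonempty := ⟨y j₀, Set.mem_biUnion hj₀ (Metric.mem_ball_self hδ)⟩
        have hWne : W.Nonempty := ⟨y k₂, Set.mem_biUnion (Finset.mem_sdiff.mpr ⟨hk₂K, hk₂S⟩)
          (Metric.mem_ball_self hδ)⟩
        have hWopen : IsOpen W := isOpen_biUnion fun _ _ => Metric.isOpen_ball
        obtain ⟨z, hzV, hzW⟩ := closure_inter_nonempty hVne hWne hWopen hdense
        obtain ⟨v, hv1, hv2⟩ := Metric.mem_closure_iff.mp hzV (δ/4) (by positivity)
        obtain ⟨w', hw1, hw2⟩ := Metric.mem_closure_iff.mp hzW (δ/4) (by positivity)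
        obtain ⟨j, hjS, hjd⟩ := hVmem v hv1
        obtain ⟨k, hkKS, hkd⟩ := hWmem w' hw1
        obtain ⟨u, huU, hud⟩ := hUpt j hjS
        refine ⟨k, hkKS, Metric.mem_thickening_iff.mpr ⟨u, huU, ?_⟩⟩
        have h4 : dist (y k) u ≤ dist (y k) w' + dist w' z + dist z v + dist v (y j)
            + dist (y j) u := by
          calc dist (y k) u ≤ dist (y k) v + dist v (y j) + dist (y j) u :=
                dist_triangle4 _ _ _ _
            _ ≤ (dist (y k) w' + dist w' z + dist z v) + dist v (y j) + dist (y j) u := by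
                have := dist_triangle4 (y k) w' z v
                linarith
        have hkw : dist (y k) w' < δ := by rw [dist_comm]; exact hkd
        have hwz : dist w' z < δ/4 := by rw [dist_comm]; exact hw2
        have hzv : dist z v < δ/4 := hv2
        rw [hδdef] at hkw hwz hzv hjd hud
        rw [hrdef]
        linarith
    obtain ⟨k₀, ⟨hk₀K, hk₀S⟩, hk₀T⟩ := hclaim
    have hSm : (S.card : ℝ) ≤ m := by
      have := Finset.card_le_univ S
      simp only [Finset.card_univ, Fintype.card_fin] at this
      exact_mod_cast this
    have hnum : (∑ i ∈ S, ((w i : ℝ) + 1)) ≤ ((∑ i ∈ insert k₀ S, w i : ℕ) : ℝ) := by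
      push_cast [Finset.sum_insert hk₀S]
      rw [Finset.sum_add_distrib]
      simp only [Finset.sum_const, nsmul_eq_mul, mul_one]
      have hwk : (m : ℝ) + 1 ≤ (w k₀ : ℝ) := by exact_mod_cast hwm k₀ hk₀K
      linarith
    have hreal : (∑ i ∈ S, ((w i : ℝ) + 1) / n) ≤ ((∑ i ∈ insert k₀ S, w i : ℕ) : ℝ) / n := by
      rw [← Finset.sum_div]
      gcongr
    calc μ U ≤ ∑ i ∈ S, μ (A i) := hμU
      _ ≤ ∑ i ∈ S, ENNReal.ofReal (((w i : ℝ) + 1) / n) :=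
          Finset.sum_le_sum fun i _ => hwup i
      _ = ENNReal.ofReal (∑ i ∈ S, ((w i : ℝ) + 1) / n) := by
          rw [ENNReal.ofReal_sum_of_nonneg]
          intro i _; positivity
      _ ≤ ENNReal.ofReal (((∑ i ∈ insert k₀ S, w i : ℕ) : ℝ) / n) :=
          ENNReal.ofReal_le_ofReal hreal
      _ = ((∑ i ∈ insert k₀ S, w i : ℕ) : ℝ≥0∞) / n := by
          rw [ENNReal.ofReal_div_of_pos hnR, ENNReal.ofReal_natCast, ENNReal.ofReal_natCast]
      _ ≤ ν T := by
          apply hν T hTmeas (insert k₀ S)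
          intro i hi
          rcases Finset.mem_insert.mp hi with h | h
          · exact h ▸ hk₀T
          · exact hyS i h
  have hWinf : Winf μ ν ≤ r := csInf_le ⟨0, fun s hs => hs.1.le⟩ hrmem
  exact lt_of_le_of_lt hWinf hrε
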